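/- For n >= 1, the number of ascent sequences of length n avoiding both patterns 0101 and 0112 equals (n-1)*2^{n-2} + 1. -/

import Mathlib

/-- Number of ascents of a sequence (list) of natural numbers. -/
def asc (l : List ℕ) : ℕ :=
  ((List.range (l.length - 1)).filter (fun j => l.getD j 0 < l.getD (j + 1) 0)).length

/-- `x` is an ascent sequence: nonempty, starts with 0, and each later entry is
at most one more than the number of ascents of the preceding prefix. -/
def IsAscSeq (x : List ℕ) : Prop :=
  x ≠ [] ∧ x.getD 0 0 = 0 ∧
    ∀ i, 1 ≤ i → i < x.length → x.getD i 0 ≤ 1 + asc (x.take i)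

/-- `x` contains the pattern `p`: some subsequence of `x` is order-isomorphic
(including equalities) to `p`, i.e. its reduction equals `p`. -/
def Contains (p x : List ℕ) : Prop :=
  ∃ y : List ℕ, y.Sublist x ∧ y.length = p.length ∧
    ∀ i j, i < p.length → j < p.length →
      (y.getD i 0 < y.getD j 0 ↔ p.getD i 0 < p.getD j 0)

/-- `x` avoids the pattern `p`. -/
def Avoids (p x : List ℕ) : Prop := ¬ Contains p x


lemma contains0101_iff (x : List ℕ) :
    Contains [0,1,0,1] x ↔ ∃ a b : ℕ, a < b ∧ [a,b,a,b].Sublist x := by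
  constructor
  · rintro ⟨y, hsub, hlen, hiso⟩
    rcases y with _|⟨a,_|⟨b,_|⟨c,_|⟨d,_|⟨e,t⟩⟩⟩⟩⟩ <;> simp at hlen
    have h01 := hiso 0 1 (by norm_num) (by norm_num)
    have h02 := hiso 0 2 (by norm_num) (by norm_num)
    have h20 := hiso 2 0 (by norm_num) (by norm_num)
    have h13 := hiso 1 3 (by norm_num) (by norm_num)
    have h31 := hiso 3 1 (by norm_num) (by norm_num)
    simp [List.getD] at h01 h02 h20 h13 h31
    have hac : a = c := by omega
    have hbd : b = d := by omega
    exact ⟨a, b, h01, by rw [hac, hbd] at hsub ⊢; exact hsub⟩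
  · rintro ⟨a, b, hab, hsub⟩
    refine ⟨[a,b,a,b], hsub, rfl, ?_⟩
    intro i j hi hj
    simp only [List.length_cons, List.length_nil] at hi hj
    interval_cases i <;> interval_cases j <;> simp [List.getD] <;> omega

lemma contains0112_iff (x : List ℕ) :
    Contains [0,1,1,2] x ↔ ∃ a b c : ℕ, a < b ∧ b < c ∧ [a,b,b,c].Sublist x := by
  constructor
  · rintro ⟨y, hsub, hlen, hiso⟩
    rcases y with _|⟨a,_|⟨b,_|⟨c,_|⟨d,_|⟨e,t⟩⟩⟩⟩⟩ <;> simp at hlen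
    have h01 := hiso 0 1 (by norm_num) (by norm_num)
    have h12 := hiso 1 2 (by norm_num) (by norm_num)
    have h21 := hiso 2 1 (by norm_num) (by norm_num)
    have h23 := hiso 2 3 (by norm_num) (by norm_num)
    simp [List.getD] at h01 h12 h21 h23
    have hbc : b = c := by omega
    refine ⟨a, b, d, h01, by omega, ?_⟩
    rw [hbc] at hsub ⊢; exact hsub
  · rintro ⟨a, b, c, hab, hbc, hsub⟩
    refine ⟨[a,b,b,c], hsub, rfl, ?_⟩
    intro i j hi hj
    simp only [List.length_cons, List.length_nil] at hi hj
    interval_cases i <;> interval_cases j <;> simp [List.getD] <;> omega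

lemma sublist_snoc_decomp {α : Type*} {y x : List α} {v : α} (h : y.Sublist (x ++ [v])) :
    y.Sublist x ∨ ∃ y', y = y' ++ [v] ∧ y'.Sublist x := by
  rw [List.sublist_append_iff] at h
  obtain ⟨l1, l2, rfl, h1, h2⟩ := h
  rcases List.sublist_singleton.mp h2 with rfl | rfl
  · left; simpa using h1
  · right; exact ⟨l1, rfl, h1⟩

lemma contains0101_snoc (x : List ℕ) (v : ℕ) :
    Contains [0,1,0,1] (x ++ [v]) ↔
      Contains [0,1,0,1] x ∨ ∃ a, a < v ∧ [a,v,a].Sublist x := by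
  rw [contains0101_iff]
  constructor
  · rintro ⟨a, b, hab, hsub⟩
    rcases sublist_snoc_decomp hsub with h | ⟨y', he, h⟩
    · exact Or.inl ((contains0101_iff x).mpr ⟨a, b, hab, h⟩)
    · have : y' = [a,b,a] ∧ b = v := by
        have he' : y' ++ [v] = [a,b,a] ++ [b] := he.symm
        have := List.append_inj' he' rfl
        obtain ⟨h1, h2⟩ := this
        simp at h2
        exact ⟨h1, h2.symm⟩
      obtain ⟨rfl, rfl⟩ := this
      exact Or.inr ⟨a, hab, h⟩
  · rintro (h | ⟨a, hav, hsub⟩)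
    · obtain ⟨a, b, hab, hsub⟩ := (contains0101_iff x).mp h
      exact ⟨a, b, hab, hsub.trans (List.sublist_append_left x [v])⟩
    · exact ⟨a, v, hav, by
        have : ([a,v,a] ++ [v]).Sublist (x ++ [v]) := hsub.append (List.Sublist.refl [v])
        simpa using this⟩

lemma contains0112_snoc (x : List ℕ) (v : ℕ) :
    Contains [0,1,1,2] (x ++ [v]) ↔
      Contains [0,1,1,2] x ∨ ∃ a b, a < b ∧ b < v ∧ [a,b,b].Sublist x := by
  rw [contains0112_iff]
  constructor
  · rintro ⟨a, b, c, hab, hbc, hsub⟩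
    rcases sublist_snoc_decomp hsub with h | ⟨y', he, h⟩
    · exact Or.inl ((contains0112_iff x).mpr ⟨a, b, c, hab, hbc, h⟩)
    · have : y' = [a,b,b] ∧ c = v := by
        have he' : y' ++ [v] = [a,b,b] ++ [c] := he.symm
        have := List.append_inj' he' rfl
        obtain ⟨h1, h2⟩ := this
        simp at h2
        exact ⟨h1, h2.symm⟩
      obtain ⟨rfl, rfl⟩ := this
      exact Or.inr ⟨a, b, hab, hbc, h⟩
  · rintro (h | ⟨a, b, hab, hbv, hsub⟩)
    · obtain ⟨a, b, c, hab, hbc, hsub⟩ := (contains0112_iff x).mp h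
      exact ⟨a, b, c, hab, hbc, hsub.trans (List.sublist_append_left x [v])⟩
    · exact ⟨a, b, v, hab, hbv, by
        have : ([a,b,b] ++ [v]).Sublist (x ++ [v]) := hsub.append (List.Sublist.refl [v])
        simpa using this⟩

lemma asc_snoc (x : List ℕ) (v : ℕ) (hx : x ≠ []) :
    asc (x ++ [v]) = asc x + if x.getD (x.length - 1) 0 < v then 1 else 0 := by
  have hlen : x.length - 1 + 1 = x.length := Nat.succ_pred_eq_of_pos (List.length_pos_iff.mpr hx)
  unfold asc
  rw [List.length_append]
  simp only [List.length_cons, List.length_nil]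
  have h1 : x.length + 1 - 1 = (x.length - 1) + 1 := by omega
  rw [h1, List.range_succ, List.filter_append]
  rw [List.length_append]
  congr 1
  · apply congrArg
    apply List.filter_congr
    intro j hj
    rw [List.mem_range] at hj
    have hj1 : j < x.length := by omega
    have hj2 : j + 1 < x.length := by omega
    rw [List.getD_append _ _ _ _ hj1, List.getD_append _ _ _ _ hj2]
  · have hlast : (x ++ [v]).getD (x.length - 1) 0 = x.getD (x.length - 1) 0 :=
      List.getD_append _ _ _ _ (by omega)
    have hv : (x ++ [v]).getD (x.length - 1 + 1) 0 = v := by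
      rw [hlen, List.getD_append_right _ _ _ _ (le_refl _)]
      simp
    simp only [List.filter, hlast, hv]
    by_cases h : x[x.length - 1]?.getD 0 < v <;> simp [List.getD, h]

lemma isAscSeq_snoc (x : List ℕ) (v : ℕ) (hx : x ≠ []) :
    IsAscSeq (x ++ [v]) ↔ IsAscSeq x ∧ v ≤ 1 + asc x := by
  have hlp : 0 < x.length := List.length_pos_iff.mpr hx
  constructor
  · rintro ⟨-, h0, hb⟩
    refine ⟨⟨hx, ?_, ?_⟩, ?_⟩
    · rwa [List.getD_append _ _ _ _ hlp] at h0
    · intro i hi hilt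
      have := hb i hi (by rw [List.length_append]; simp; omega)
      rwa [List.getD_append _ _ _ _ hilt,
        List.take_append_of_le_length (le_of_lt hilt)] at this
    · have := hb x.length (by omega) (by rw [List.length_append]; simp)
      rw [List.getD_append_right _ _ _ _ (le_refl _), Nat.sub_self,
        List.take_left] at this
      simpa using this
  · rintro ⟨⟨-, h0, hb⟩, hv⟩
    refine ⟨by simp, ?_, ?_⟩
    · rwa [List.getD_append _ _ _ _ hlp]
    · intro i hi hilt
      rw [List.length_append, List.length_cons, List.length_nil] at hilt
      rcases Nat.lt_or_ge i x.length with h | h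
      · rw [List.getD_append _ _ _ _ h, List.take_append_of_le_length (le_of_lt h)]
        exact hb i hi h
      · have hie : i = x.length := by omega
        subst hie
        rw [List.getD_append_right _ _ _ _ (le_refl _), Nat.sub_self, List.take_left]
        simpa using hv

def Valid (x : List ℕ) : Prop :=
  IsAscSeq x ∧ Avoids [0,1,0,1] x ∧ Avoids [0,1,1,2] x

lemma valid_snoc (x : List ℕ) (v : ℕ) (hx : x ≠ []) :
    Valid (x ++ [v]) ↔ Valid x ∧ v ≤ 1 + asc x ∧
      (∀ a, a < v → ¬ [a,v,a].Sublist x) ∧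
      (∀ a b, a < b → b < v → ¬ [a,b,b].Sublist x) := by
  unfold Valid Avoids
  rw [isAscSeq_snoc x v hx, contains0101_snoc, contains0112_snoc]
  constructor
  · rintro ⟨⟨h1, h2⟩, h3, h4⟩
    exact ⟨⟨h1, fun c => h3 (Or.inl c), fun c => h4 (Or.inl c)⟩, h2,
      fun a ha hs => h3 (Or.inr ⟨a, ha, hs⟩),
      fun a b hab hbv hs => h4 (Or.inr ⟨a, b, hab, hbv, hs⟩)⟩
  · rintro ⟨⟨h1, h3, h4⟩, h2, h5, h6⟩
    refine ⟨⟨h1, h2⟩, ?_, ?_⟩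
    · rintro (c | ⟨a, ha, hs⟩)
      · exact h3 c
      · exact h5 a ha hs
    · rintro (c | ⟨a, b, hab, hbv, hs⟩)
      · exact h4 c
      · exact h6 a b hab hbv hs

lemma sublist3_snoc {a b c v : ℕ} {x : List ℕ} (h : [a,b,c].Sublist (x ++ [v])) :
    [a,b,c].Sublist x ∨ ([a,b].Sublist x ∧ c = v) := by
  rcases sublist_snoc_decomp h with h | ⟨y', he, hs⟩
  · exact Or.inl h
  · have he' : y' ++ [v] = [a,b] ++ [c] := he.symm
    obtain ⟨h1, h2⟩ := List.append_inj' he' rfl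
    subst h1
    right
    simp at h2
    exact ⟨hs, h2.symm⟩

lemma getD_last_mem (x : List ℕ) (hx : x ≠ []) : x.getD (x.length - 1) 0 ∈ x := by
  have h : x.length - 1 < x.length := by
    have := List.length_pos_iff.mpr hx; omega
  rw [List.getD_eq_getElem _ _ h]
  exact List.getElem_mem h

lemma snoc_getD_last (x : List ℕ) (v : ℕ) :
    (x ++ [v]).getD ((x ++ [v]).length - 1) 0 = v := by
  rw [List.length_append]
  simp only [List.length_cons, List.length_nil]
  rw [List.getD_append_right _ _ _ _ (by omega)]
  simp

lemma zero_mem_of_valid {x : List ℕ} (h : Valid x) : (0:ℕ) ∈ x := by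
  obtain ⟨⟨hx, hh, -⟩, -, -⟩ := h
  cases x with
  | nil => exact absurd rfl hx
  | cons a t =>
    simp [List.getD] at hh
    subst hh
    exact List.mem_cons_self

lemma valid_zero : Valid [0] := by
  refine ⟨⟨by simp, rfl, ?_⟩, ?_, ?_⟩
  · intro i h1 h2; simp at h2; omega
  · rintro ⟨y, hs, hl, -⟩
    have := hs.length_le; rw [hl] at this; simp at this
  · rintro ⟨y, hs, hl, -⟩
    have := hs.length_le; rw [hl] at this; simp at this

lemma asc_zero : asc [0] = 0 := rfl

inductive St : Type
  | A (m c : ℕ) | D (m c v : ℕ) | Z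
deriving DecidableEq

def ext : St → Finset ℕ
  | .A m c => insert 0 (Finset.Icc (c+1) (m+1))
  | .D _ c v => insert 0 (Finset.Icc (c+1) v)
  | .Z => {0}

def δ : St → ℕ → St
  | .A m c, v => if v = 0 then .A m m else if v = m+1 then .A (m+1) c else .D m c v
  | .D m c _, u => if u = 0 then .Z else .D m c u
  | .Z, _ => .Z

def InvA (x : List ℕ) (m c : ℕ) : Prop :=
  c ≤ m ∧ asc x = m ∧ (∀ w ∈ x, w ≤ m) ∧
  (∀ w, 1 ≤ w → w ≤ m → [0, w].Sublist x) ∧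
  (∀ w, 1 ≤ w → w ≤ c → [0, w, 0].Sublist x) ∧
  (∀ a b, a < b → ¬ [a,b,b].Sublist x) ∧
  (∀ u a, c < u → a < u → ¬ [a,u,a].Sublist x) ∧
  (c < m → x.getD (x.length - 1) 0 = m)

def InvD (x : List ℕ) (m c v : ℕ) : Prop :=
  c < v ∧ v ≤ m ∧ asc x = m ∧ (∀ w ∈ x, w ≤ m) ∧
  (∀ w, 1 ≤ w → w ≤ m → [0, w].Sublist x) ∧
  (∀ w, 1 ≤ w → w ≤ c → [0, w, 0].Sublist x) ∧
  [0, v, v].Sublist x ∧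
  (∀ b, b < v → ∀ a, a < b → ¬ [a,b,b].Sublist x) ∧
  (∀ u a, c < u → u ≤ v → a < u → ¬ [a,u,a].Sublist x) ∧
  x.getD (x.length - 1) 0 = v

def InvZ (x : List ℕ) : Prop :=
  ∃ V, 1 ≤ V ∧ [0, V, V].Sublist x ∧ ∀ w, 1 ≤ w → w ≤ V → [0,w,0].Sublist x

def SInv (x : List ℕ) : St → Prop
  | .A m c => InvA x m c
  | .D m c v => InvD x m c v
  | .Z => InvZ x

lemma sl_ext {l x : List ℕ} (v : ℕ) (h : l.Sublist x) : l.Sublist (x ++ [v]) :=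
  h.trans (List.sublist_append_left x [v])

lemma sl_snoc {l x : List ℕ} (v : ℕ) (h : l.Sublist x) : (l ++ [v]).Sublist (x ++ [v]) :=
  h.append (List.Sublist.refl _)

lemma step_sound {x : List ℕ} {s : St} (hval : Valid x) (hinv : SInv x s) {v : ℕ}
    (hv : v ∈ ext s) : Valid (x ++ [v]) ∧ SInv (x ++ [v]) (δ s v) := by
  have hx : x ≠ [] := hval.1.1
  cases s with
  | A m c =>
    obtain ⟨hcm, hasc, hP0, hP4, hP1, hN1, hN2, hlast⟩ := hinv
    simp only [ext, Finset.mem_insert, Finset.mem_Icc] at hv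
    rcases hv with rfl | ⟨hv1, hv2⟩
    · -- v = 0
      refine ⟨?_, ?_⟩
      · rw [valid_snoc x 0 hx]
        exact ⟨hval, by omega, fun a ha => absurd ha (by omega),
          fun a b hab hb => absurd hb (by omega)⟩
      · show SInv (x ++ [0]) (δ (.A m c) 0)
        simp only [δ, if_pos rfl]
        show InvA (x ++ [0]) m m
        refine ⟨le_refl m, ?_, ?_, ?_, ?_, ?_, ?_, fun h => absurd h (by omega)⟩
        · rw [asc_snoc x 0 hx]; simp [hasc]
        · intro w hw
          rcases List.mem_append.mp hw with h | h
          · exact hP0 w h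
          · simp at h; omega
        · intro w h1 h2; exact sl_ext 0 (hP4 w h1 h2)
        · intro w h1 h2
          have := sl_snoc 0 (hP4 w h1 h2)
          simpa using this
        · intro a b hab hs
          rcases sublist3_snoc hs with h | ⟨h, rfl⟩
          · exact hN1 a b hab h
          · omega
        · intro u a hu hau hs
          rcases sublist3_snoc hs with h | ⟨h, ha0⟩
          · exact hN2 u a (by omega) hau h
          · subst ha0
            have hum : u ≤ m := hP0 u (h.subset (by simp))
            omega
    · -- c+1 ≤ v ≤ m+1
      by_cases hvm : v = m + 1
      · subst hvm
        refine ⟨?_, ?_⟩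
        · rw [valid_snoc x (m+1) hx]
          refine ⟨hval, by omega, fun a ha => hN2 (m+1) a (by omega) ha,
            fun a b hab hb => hN1 a b hab⟩
        · show SInv (x ++ [m+1]) (δ (.A m c) (m+1))
          simp only [δ, if_neg (by omega : ¬ m+1 = 0), if_pos rfl]
          show InvA (x ++ [m+1]) (m+1) c
          refine ⟨by omega, ?_, ?_, ?_, ?_, ?_, ?_, ?_⟩
          · rw [asc_snoc x (m+1) hx]
            have : x.getD (x.length - 1) 0 ≤ m := hP0 _ (getD_last_mem x hx)
            rw [if_pos (by omega)]; omega
          · intro w hw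
            rcases List.mem_append.mp hw with h | h
            · have := hP0 w h; omega
            · simp at h; omega
          · intro w h1 h2
            rcases Nat.lt_or_ge w (m+1) with h | h
            · exact sl_ext _ (hP4 w h1 (by omega))
            · have hw : w = m + 1 := by omega
              subst hw
              have h0 : [(0:ℕ)].Sublist x := List.singleton_sublist.mpr (zero_mem_of_valid hval)
              have := sl_snoc (m+1) h0
              simpa using this
          · intro w h1 h2; exact sl_ext _ (hP1 w h1 h2)
          · intro a b hab hs
            rcases sublist3_snoc hs with h | ⟨h, rfl⟩
            · exact hN1 a b hab h
            · have h2 : m + 1 ∈ x := h.subset (by simp)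
              have := hP0 _ h2; omega
          · intro u a hu hau hs
            rcases sublist3_snoc hs with h | ⟨h, ha⟩
            · exact hN2 u a hu hau h
            · have : u ∈ x := h.subset (by simp)
              have := hP0 u this; omega
          · intro _; exact snoc_getD_last x (m+1)
      · -- c+1 ≤ v ≤ m : enter D
        have hvle : v ≤ m := by omega
        have hcm' : c < m := by omega
        have hlastm := hlast hcm'
        refine ⟨?_, ?_⟩
        · rw [valid_snoc x v hx]
          refine ⟨hval, by omega, fun a ha => hN2 v a (by omega) ha,
            fun a b hab hb => hN1 a b hab⟩
        · show SInv (x ++ [v]) (δ (.A m c) v)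
          simp only [δ, if_neg (by omega : ¬ v = 0), if_neg hvm]
          show InvD (x ++ [v]) m c v
          refine ⟨by omega, hvle, ?_, ?_, ?_, ?_, ?_, ?_, ?_, ?_⟩
          · rw [asc_snoc x v hx, hlastm, if_neg (by omega)]; omega
          · intro w hw
            rcases List.mem_append.mp hw with h | h
            · exact hP0 w h
            · simp at h; omega
          · intro w h1 h2; exact sl_ext _ (hP4 w h1 h2)
          · intro w h1 h2; exact sl_ext _ (hP1 w h1 h2)
          · have := sl_snoc v (hP4 v (by omega) hvle)
            simpa using this
          · intro b hb a hab hs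
            rcases sublist3_snoc hs with h | ⟨h, rfl⟩
            · exact hN1 a b hab h
            · omega
          · intro u a hcu huv hau hs
            rcases sublist3_snoc hs with h | ⟨h, ha⟩
            · exact hN2 u a hcu hau h
            · omega
          · exact snoc_getD_last x v
  | D m c v0 =>
    obtain ⟨hcv, hvm, hasc, hP0, hP4, hP1, hP2, hD1, hD2, hlast⟩ := hinv
    simp only [ext, Finset.mem_insert, Finset.mem_Icc] at hv
    rcases hv with rfl | ⟨hv1, hv2⟩
    · -- v = 0 : to Z
      refine ⟨?_, ?_⟩
      · rw [valid_snoc x 0 hx]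
        exact ⟨hval, by omega, fun a ha => absurd ha (by omega),
          fun a b hab hb => absurd hb (by omega)⟩
      · show SInv (x ++ [0]) (δ (.D m c v0) 0)
        simp only [δ, if_pos rfl]
        show InvZ (x ++ [0])
        refine ⟨v0, by omega, sl_ext _ hP2, ?_⟩
        intro w h1 h2
        have := sl_snoc 0 (hP4 w h1 (by omega))
        simpa using this
    · -- c+1 ≤ v ≤ v0
      refine ⟨?_, ?_⟩
      · rw [valid_snoc x v hx]
        refine ⟨hval, by omega, fun a ha => hD2 v a (by omega) (by omega) ha,
          fun a b hab hb => hD1 b (by omega) a hab⟩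
      · show SInv (x ++ [v]) (δ (.D m c v0) v)
        simp only [δ, if_neg (by omega : ¬ v = 0)]
        show InvD (x ++ [v]) m c v
        refine ⟨by omega, by omega, ?_, ?_, ?_, ?_, ?_, ?_, ?_, ?_⟩
        · rw [asc_snoc x v hx, hlast, if_neg (by omega)]; omega
        · intro w hw
          rcases List.mem_append.mp hw with h | h
          · exact hP0 w h
          · simp at h; omega
        · intro w h1 h2; exact sl_ext _ (hP4 w h1 h2)
        · intro w h1 h2; exact sl_ext _ (hP1 w h1 h2)
        · have := sl_snoc v (hP4 v (by omega) (by omega))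
          simpa using this
        · intro b hb a hab hs
          rcases sublist3_snoc hs with h | ⟨h, rfl⟩
          · exact hD1 b (by omega) a hab h
          · omega
        · intro u a hcu huv hau hs
          rcases sublist3_snoc hs with h | ⟨h, ha⟩
          · exact hD2 u a hcu (by omega) hau h
          · omega
        · exact snoc_getD_last x v
  | Z =>
    obtain ⟨V, hV1, hV2, hV3⟩ := hinv
    simp only [ext, Finset.mem_singleton] at hv
    subst hv
    refine ⟨?_, ?_⟩
    · rw [valid_snoc x 0 hx]
      exact ⟨hval, by omega, fun a ha => absurd ha (by omega),
        fun a b hab hb => absurd hb (by omega)⟩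
    · show SInv (x ++ [0]) (δ .Z 0)
      show InvZ (x ++ [0])
      exact ⟨V, hV1, sl_ext _ hV2, fun w h1 h2 => sl_ext _ (hV3 w h1 h2)⟩

lemma step_complete {x : List ℕ} {s : St} (hinv : SInv x s) {v : ℕ}
    (h1 : v ≤ 1 + asc x)
    (h2 : ∀ a, a < v → ¬ [a,v,a].Sublist x)
    (h3 : ∀ a b, a < b → b < v → ¬ [a,b,b].Sublist x) : v ∈ ext s := by
  cases s with
  | A m c =>
    obtain ⟨hcm, hasc, hP0, hP4, hP1, hN1, hN2, hlast⟩ := hinv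
    simp only [ext, Finset.mem_insert, Finset.mem_Icc]
    rcases Nat.eq_zero_or_pos v with rfl | hv
    · exact Or.inl rfl
    · right
      constructor
      · by_contra h
        have hvc : v ≤ c := by omega
        exact h2 0 hv (hP1 v hv hvc)
      · rw [hasc] at h1; omega
  | D m c v0 =>
    obtain ⟨hcv, hvm, hasc, hP0, hP4, hP1, hP2, hD1, hD2, hlast⟩ := hinv
    simp only [ext, Finset.mem_insert, Finset.mem_Icc]
    rcases Nat.eq_zero_or_pos v with rfl | hv
    · exact Or.inl rfl
    · right
      constructor
      · by_contra h
        have hvc : v ≤ c := by omega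
        exact h2 0 hv (hP1 v hv hvc)
      · by_contra h
        have hvv : v0 < v := by omega
        exact h3 0 v0 (by omega) hvv hP2
  | Z =>
    obtain ⟨V, hV1, hV2, hV3⟩ := hinv
    simp only [ext, Finset.mem_singleton]
    by_contra h
    have hv : 1 ≤ v := by omega
    rcases Nat.lt_or_ge V v with hlt | hge
    · exact h3 0 V hV1 hlt hV2
    · exact h2 0 hv (hV3 v hv hge)

def stepF (S : Finset (List ℕ × St)) : Finset (List ℕ × St) :=
  S.biUnion (fun p => (ext p.2).image (fun v => (p.1 ++ [v], δ p.2 v)))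

def G : ℕ → Finset (List ℕ × St)
  | 0 => {([0], .A 0 0)}
  | n+1 => stepF (G n)

lemma mem_stepF {S : Finset (List ℕ × St)} {p : List ℕ × St} :
    p ∈ stepF S ↔ ∃ q ∈ S, ∃ v ∈ ext q.2, p = (q.1 ++ [v], δ q.2 v) := by
  simp [stepF, Finset.mem_biUnion, Finset.mem_image, eq_comm]

lemma inv_of_mem : ∀ n, ∀ p ∈ G n, Valid p.1 ∧ SInv p.1 p.2 ∧ p.1.length = n + 1 := by
  intro n
  induction n with
  | zero =>
    intro p hp
    simp only [G, Finset.mem_singleton] at hp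
    subst hp
    refine ⟨valid_zero, ?_, rfl⟩
    show InvA [0] 0 0
    refine ⟨le_refl 0, asc_zero, ?_, ?_, ?_, ?_, ?_, ?_⟩
    · intro w hw; simp at hw; omega
    · intro w h1 h2; omega
    · intro w h1 h2; omega
    · intro a b hab hs
      have := hs.length_le; simp at this
    · intro u a hu hau hs
      have := hs.length_le; simp at this
    · intro h; omega
  | succ n ih =>
    intro p hp
    rw [show G (n+1) = stepF (G n) from rfl, mem_stepF] at hp
    obtain ⟨q, hq, v, hv, rfl⟩ := hp
    obtain ⟨hval, hinv, hlen⟩ := ih q hq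
    obtain ⟨hval', hinv'⟩ := step_sound hval hinv hv
    exact ⟨hval', hinv', by simp [hlen]⟩

lemma complete : ∀ n (x : List ℕ), Valid x → x.length = n + 1 → ∃ s, (x, s) ∈ G n := by
  intro n
  induction n with
  | zero =>
    intro x hval hlen
    rcases x with _ | ⟨a, t⟩
    · simp at hlen
    · rcases t with _ | ⟨b, t'⟩
      · have : a = 0 := by
          have := hval.1.2.1; simpa [List.getD] using this
        subst this
        exact ⟨.A 0 0, by simp [G]⟩
      · simp at hlen
  | succ n ih =>
    intro x hval hlen
    have hx : x ≠ [] := hval.1.1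
    obtain ⟨y, v, rfl⟩ : ∃ y v, x = y ++ [v] := by
      rcases x.eq_nil_or_concat with h | ⟨y, v, h⟩
      · exact absurd h hx
      · exact ⟨y, v, by simpa using h⟩
    have hylen : y.length = n + 1 := by
      rw [List.length_append] at hlen; simp at hlen; omega
    have hy : y ≠ [] := by
      intro h; rw [h] at hylen; simp at hylen
    rw [valid_snoc y v hy] at hval
    obtain ⟨hvaly, h1, h2, h3⟩ := hval
    obtain ⟨s, hs⟩ := ih y hvaly hylen
    obtain ⟨-, hinv, -⟩ := inv_of_mem n (y, s) hs
    have hvext : v ∈ ext s := step_complete hinv h1 h2 h3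
    exact ⟨δ s v, by
      rw [show G (n+1) = stepF (G n) from rfl, mem_stepF]
      exact ⟨(y, s), hs, v, hvext, rfl⟩⟩

lemma fst_injOn : ∀ n, ∀ p ∈ G n, ∀ q ∈ G n, p.1 = q.1 → p = q := by
  intro n
  induction n with
  | zero =>
    intro p hp q hq _
    simp only [G, Finset.mem_singleton] at hp hq
    rw [hp, hq]
  | succ n ih =>
    intro p hp q hq hfst
    rw [show G (n+1) = stepF (G n) from rfl, mem_stepF] at hp hq
    obtain ⟨p', hp', v, hv, rfl⟩ := hp
    obtain ⟨q', hq', w, hw, rfl⟩ := hq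
    simp only at hfst
    have hlp : p'.1.length = n + 1 := (inv_of_mem n p' hp').2.2
    have hlq : q'.1.length = n + 1 := (inv_of_mem n q' hq').2.2
    obtain ⟨hfe, hve⟩ := List.append_inj hfst (by omega)
    have hv' : v = w := by simpa using hve
    subst hv'
    have := ih p' hp' q' hq' hfe
    rw [this]

def S (n : ℕ) (W : St → ℕ) : ℕ := ∑ p ∈ G n, W p.2

def wAany : St → ℕ | .A _ _ => 1 | _ => 0
def wAge (d : ℕ) : St → ℕ | .A m c => if d ≤ m - c then 1 else 0 | _ => 0
def wD (d : ℕ) : St → ℕ | .D _ c v => if v - c = d then 1 else 0 | _ => 0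
def wDge (d : ℕ) : St → ℕ | .D _ c v => if d ≤ v - c then 1 else 0 | _ => 0
def wZ : St → ℕ | .Z => 1 | _ => 0

lemma asc_le (l : List ℕ) : asc l ≤ l.length - 1 := by
  unfold asc
  calc ((List.range (l.length - 1)).filter _).length ≤ (List.range (l.length - 1)).length :=
        List.length_filter_le _ _
    _ = l.length - 1 := List.length_range

def stOK (n : ℕ) : St → Prop
  | .A m c => c ≤ m ∧ m ≤ n
  | .D m c v => c < v ∧ v ≤ m ∧ m ≤ n
  | .Z => True

lemma state_facts {n : ℕ} {p : List ℕ × St} (hp : p ∈ G n) : stOK n p.2 := by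
  obtain ⟨hval, hinv, hlen⟩ := inv_of_mem n p hp
  have hasc : asc p.1 ≤ n := by
    have := asc_le p.1; omega
  cases hs : p.2 with
  | A m c =>
    rw [hs] at hinv
    obtain ⟨h1, h2, -⟩ := hinv
    exact ⟨h1, by omega⟩
  | D m c v =>
    rw [hs] at hinv
    obtain ⟨h1, h2, h3, -⟩ := hinv
    exact ⟨h1, h2, by omega⟩
  | Z => trivial

lemma S_succ (n : ℕ) (W : St → ℕ) :
    S (n+1) W = S n (fun s => ∑ v ∈ ext s, W (δ s v)) := by
  unfold S
  show ∑ p ∈ stepF (G n), W p.2 = _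
  rw [stepF, Finset.sum_biUnion]
  · apply Finset.sum_congr rfl
    intro q hq
    rw [Finset.sum_image]
    intro v _ w _ he
    have : q.1 ++ [v] = q.1 ++ [w] := congrArg Prod.fst he
    simpa using List.append_cancel_left this
  · intro p hp q hq hne
    simp only [Finset.disjoint_left]
    intro r hrp hrq
    simp only [Finset.mem_coe] at hp hq
    simp only [Finset.mem_image] at hrp hrq
    obtain ⟨v, -, rfl⟩ := hrp
    obtain ⟨w, -, he⟩ := hrq
    have hfst : q.1 ++ [w] = p.1 ++ [v] := congrArg Prod.fst he
    have hlp : p.1.length = n + 1 := (inv_of_mem n p hp).2.2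
    have hlq : q.1.length = n + 1 := (inv_of_mem n q hq).2.2
    obtain ⟨h1, -⟩ := List.append_inj hfst (by omega)
    exact hne (fst_injOn n q hq p hp h1).symm

lemma sum_ext_A (m c : ℕ) (hcm : c ≤ m) (f : ℕ → ℕ) :
    ∑ v ∈ ext (.A m c), f v = f 0 + (f (m+1) + ∑ v ∈ Finset.Icc (c+1) m, f v) := by
  show ∑ v ∈ insert 0 (Finset.Icc (c+1) (m+1)), f v = _
  rw [Finset.sum_insert (by simp)]
  rw [Finset.sum_Icc_succ_top (show c+1 ≤ m+1 by omega) f]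
  ring

lemma sum_ext_D (m c v0 : ℕ) (f : ℕ → ℕ) :
    ∑ v ∈ ext (.D m c v0), f v = f 0 + ∑ v ∈ Finset.Icc (c+1) v0, f v := by
  show ∑ v ∈ insert 0 (Finset.Icc (c+1) v0), f v = _
  rw [Finset.sum_insert (by simp)]

lemma sum_ext_Z (f : ℕ → ℕ) : ∑ v ∈ ext .Z, f v = f 0 := by
  show ∑ v ∈ ({0} : Finset ℕ), f v = f 0
  simp

lemma delta_A_zero (m c : ℕ) : δ (.A m c) 0 = .A m m := rfl

lemma delta_A_top (m c : ℕ) : δ (.A m c) (m+1) = .A (m+1) c := by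
  simp [δ]

lemma delta_A_mid (m c v : ℕ) (h1 : c + 1 ≤ v) (h2 : v ≤ m) : δ (.A m c) v = .D m c v := by
  simp only [δ, if_neg (by omega : ¬ v = 0), if_neg (by omega : ¬ v = m+1)]

lemma delta_D_zero (m c v0 : ℕ) : δ (.D m c v0) 0 = .Z := rfl

lemma delta_D_mid (m c v0 v : ℕ) (h1 : c + 1 ≤ v) : δ (.D m c v0) v = .D m c v := by
  simp only [δ, if_neg (by omega : ¬ v = 0)]


lemma T_eval_A (m c : ℕ) (hcm : c ≤ m) (W : St → ℕ) :
    ∑ v ∈ ext (.A m c), W (δ (.A m c) v) =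
      W (.A m m) + W (.A (m+1) c) + ∑ v ∈ Finset.Icc (c+1) m, W (.D m c v) := by
  rw [sum_ext_A m c hcm, delta_A_zero, delta_A_top]
  rw [Finset.sum_congr rfl (fun v hv => by
    rw [delta_A_mid m c v (Finset.mem_Icc.mp hv).1 (Finset.mem_Icc.mp hv).2])]
  ring

lemma T_eval_D (m c v0 : ℕ) (W : St → ℕ) :
    ∑ v ∈ ext (.D m c v0), W (δ (.D m c v0) v) =
      W .Z + ∑ v ∈ Finset.Icc (c+1) v0, W (.D m c v) := by
  rw [sum_ext_D m c v0, delta_D_zero]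
  rw [Finset.sum_congr rfl (fun v hv => by
    rw [delta_D_mid m c v0 v (Finset.mem_Icc.mp hv).1])]

lemma T_eval_Z (W : St → ℕ) : ∑ v ∈ ext .Z, W (δ .Z v) = W .Z := sum_ext_Z _

lemma S_eq (n : ℕ) (W W' : St → ℕ) (h : ∀ s, stOK n s → W s = W' s) : S n W = S n W' :=
  Finset.sum_congr rfl fun q hq => h q.2 (state_facts hq)

lemma S_zero (W : St → ℕ) : S 0 W = W (.A 0 0) := by simp [S, G]

lemma S_add (n : ℕ) (W W' : St → ℕ) :
    S n (fun s => W s + W' s) = S n W + S n W' := Finset.sum_add_distrib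

lemma sum_indicator_Icc (lo hi t : ℕ) :
    ∑ v ∈ Finset.Icc lo hi, (if v = t then 1 else 0) = if t ∈ Finset.Icc lo hi then 1 else 0 := by
  rw [Finset.sum_ite_eq' (Finset.Icc lo hi) t (fun _ => 1)]

lemma sum_sub_indicator (c d hi : ℕ) :
    ∑ v ∈ Finset.Icc (c+1) hi, (if v - c = d then 1 else 0)
      = if 1 ≤ d ∧ c + d ≤ hi then 1 else 0 := by
  rw [Finset.sum_congr rfl (fun v hv => by
    obtain ⟨h1, h2⟩ := Finset.mem_Icc.mp hv
    show (if v - c = d then 1 else 0) = (if v = c + d then 1 else 0)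
    by_cases h : v = c + d
    · rw [if_pos (by omega), if_pos h]
    · rw [if_neg (by omega), if_neg h])]
  rw [sum_indicator_Icc]
  by_cases h : 1 ≤ d ∧ c + d ≤ hi
  · rw [if_pos (Finset.mem_Icc.mpr ⟨by omega, by omega⟩), if_pos h]
  · rw [if_neg (fun hm => h (by
      obtain ⟨h1, h2⟩ := Finset.mem_Icc.mp hm
      exact ⟨by omega, by omega⟩)), if_neg h]

lemma S_wAany_succ (n : ℕ) : S (n+1) wAany = 2 * S n wAany := by
  have h2 : S n (fun s => 2 * wAany s) = 2 * S n wAany := by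
    unfold S; rw [Finset.mul_sum]
  rw [S_succ, ← h2]
  apply S_eq
  intro s hOK
  cases s with
  | A m c =>
    rw [T_eval_A m c hOK.1]
    simp [wAany]
  | D m c v0 => rw [T_eval_D]; simp [wAany]
  | Z => rw [T_eval_Z]; simp [wAany]

lemma S_wAge_one_succ (n : ℕ) : S (n+1) (wAge 1) = S n wAany := by
  rw [S_succ]
  apply S_eq
  intro s hOK
  cases s with
  | A m c =>
    obtain ⟨hcm, -⟩ := hOK
    rw [T_eval_A m c hcm]
    simp only [wAge, wAany, Finset.sum_const_zero]
    rw [if_neg (by omega), if_pos (by omega)]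
    norm_num
  | D m c v0 => rw [T_eval_D]; simp [wAge, wAany]
  | Z => rw [T_eval_Z]; simp [wAge, wAany]

lemma S_wAge_succ_succ (n d : ℕ) :
    S (n+1) (wAge (d+2)) = S n (wAge (d+1)) := by
  rw [S_succ]
  apply S_eq
  intro s hOK
  cases s with
  | A m c =>
    obtain ⟨hcm, -⟩ := hOK
    rw [T_eval_A m c hcm]
    simp only [wAge, Finset.sum_const_zero]
    rw [if_neg (by omega)]
    by_cases h : d + 1 ≤ m - c
    · rw [if_pos (by omega), if_pos h]; norm_num
    · rw [if_neg (by omega), if_neg h]; norm_num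
  | D m c v0 => rw [T_eval_D]; simp [wAge]
  | Z => rw [T_eval_Z]; simp [wAge]

lemma S_wD_succ (n d : ℕ) (hd : 1 ≤ d) :
    S (n+1) (wD d) = S n (fun s => wAge d s + wDge d s) := by
  rw [S_succ]
  apply S_eq
  intro s hOK
  cases s with
  | A m c =>
    obtain ⟨hcm, -⟩ := hOK
    rw [T_eval_A m c hcm]
    simp only [wD, wAge, wDge]
    rw [sum_sub_indicator c d m]
    by_cases h : d ≤ m - c
    · rw [if_pos ⟨hd, by omega⟩, if_pos h]
    · rw [if_neg (by omega), if_neg h]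
  | D m c v0 =>
    obtain ⟨hcv, hvm, -⟩ := hOK
    rw [T_eval_D]
    simp only [wD, wAge, wDge]
    rw [sum_sub_indicator c d v0]
    by_cases h : d ≤ v0 - c
    · rw [if_pos ⟨hd, by omega⟩, if_pos h]
    · rw [if_neg (by omega), if_neg h]
  | Z => rw [T_eval_Z]; simp [wD, wAge, wDge]

lemma S_wZ_succ (n : ℕ) : S (n+1) wZ = S n (fun s => wZ s + wDge 1 s) := by
  rw [S_succ]
  apply S_eq
  intro s hOK
  cases s with
  | A m c =>
    rw [T_eval_A m c hOK.1]
    simp [wZ, wDge]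
  | D m c v0 =>
    obtain ⟨hcv, -, -⟩ := hOK
    rw [T_eval_D]
    simp only [wZ, wDge, Finset.sum_const_zero]
    rw [if_pos (by omega)]
    omega
  | Z => rw [T_eval_Z]; simp [wZ, wDge]

lemma S_wDge_eq (n e : ℕ) :
    S n (wDge e) = ∑ d ∈ Finset.Icc e n, S n (wD d) := by
  unfold S
  rw [Finset.sum_comm]
  apply Finset.sum_congr rfl
  intro q hq
  have hOK := state_facts hq
  cases hs : q.2 with
  | A m c => simp [wDge, wD]
  | D m c v0 =>
    rw [hs] at hOK
    obtain ⟨hcv, hvm, hmn⟩ := hOK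
    simp only [wDge, wD]
    rw [Finset.sum_congr rfl (fun d hd => by
      show (if v0 - c = d then 1 else 0) = (if d = v0 - c then 1 else 0)
      by_cases h : d = v0 - c
      · rw [if_pos h.symm, if_pos h]
      · rw [if_neg (fun hh => h hh.symm), if_neg h])]
    rw [sum_indicator_Icc]
    by_cases h : e ≤ v0 - c
    · rw [if_pos h, if_pos (Finset.mem_Icc.mpr ⟨h, by omega⟩)]
    · rw [if_neg h, if_neg (fun hm => h (Finset.mem_Icc.mp hm).1)]
  | Z => simp [wDge, wD]

def gq : ℕ → ℕ := fun r => if r ≤ 2 then 0 else if r = 3 then 1 else (r-1) * 2^(r-4)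
def GF : ℕ → ℕ := fun m => if m ≤ 2 then 0 else if m = 3 then 1 else (m-2) * 2^(m-3)
def zF : ℕ → ℕ := fun n => if n ≤ 2 then 0 else (n-3) * 2^(n-2) + 1

lemma GF_succ (t : ℕ) : GF (t+1) = GF t + gq (t+1) := by
  match t with
  | 0 => rfl
  | 1 => rfl
  | 2 => rfl
  | 3 => rfl
  | (k+4) =>
    show GF (k+5) = GF (k+4) + gq (k+5)
    simp only [GF, gq]
    rw [if_neg (by omega), if_neg (by omega), if_neg (by omega), if_neg (by omega),
      if_neg (by omega), if_neg (by omega)]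
    have e1 : k+5-2 = k+3 := by omega
    have e2 : k+5-3 = k+2 := by omega
    have e3 : k+4-2 = k+2 := by omega
    have e4 : k+4-3 = k+1 := by omega
    have e5 : k+5-1 = k+4 := by omega
    have e6 : k+5-4 = k+1 := by omega
    rw [e1, e2, e3, e4, e5, e6]
    rw [pow_succ]
    ring

lemma SV1 : ∀ t : ℕ, (∑ i ∈ Finset.range (t-1), gq (t - i)) = GF t := by
  intro t
  induction t with
  | zero => rfl
  | succ n ih =>
    match n, ih with
    | 0, _ => rfl
    | (m+1), ih =>
      show (∑ i ∈ Finset.range (m+1), gq (m+2 - i)) = GF (m+2)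
      rw [Finset.sum_range_succ']
      have h1 : ∀ i, gq (m+2 - (i+1)) = gq (m+1 - i) := by
        intro i; congr 1; omega
      rw [Finset.sum_congr rfl (fun i _ => h1 i)]
      have h2 : (∑ i ∈ Finset.range m, gq (m+1 - i)) = GF (m+1) := by
        have := ih
        simpa using this
      rw [h2]
      rw [GF_succ (m+1)]
      have e : m+2-0 = m+2 := by omega
      rw [e]

lemma sum_Icc_shift (f : ℕ → ℕ) (e n : ℕ) :
    ∑ d ∈ Finset.Icc e n, f d = ∑ i ∈ Finset.range (n+1-e), f (e+i) := by
  apply Finset.sum_nbij' (fun d => d - e) (fun i => e + i)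
  · intro a ha; simp only [Finset.mem_Icc] at ha; simp; omega
  · intro a ha; simp only [Finset.mem_range] at ha; simp [Finset.mem_Icc]; omega
  · intro a ha; simp only [Finset.mem_Icc] at ha; omega
  · intro a ha; omega
  · intro a ha; simp only [Finset.mem_Icc] at ha; congr 1; omega

lemma AR1 (n e : ℕ) : (∑ d ∈ Finset.Icc e n, gq (n+2-d)) = GF (n+2-e) := by
  rw [sum_Icc_shift]
  have h1 : ∀ i, gq (n+2-(e+i)) = gq ((n+2-e) - i) := by
    intro i; congr 1; omega
  rw [Finset.sum_congr rfl (fun i _ => h1 i)]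
  have h2 : n + 1 - e = (n+2-e) - 1 := by omega
  rw [h2, SV1]

lemma AR2 (n d : ℕ) (hd : 1 ≤ d) :
    gq (n+3-d) = (if d ≤ n then 2^(n-d) else 0) + GF (n+2-d) := by
  by_cases h : d ≤ n
  · rw [if_pos h]
    obtain ⟨m, rfl⟩ : ∃ m, n = d + m := ⟨n - d, by omega⟩
    have e1 : d + m + 3 - d = m + 3 := by omega
    have e2 : d + m - d = m := by omega
    have e3 : d + m + 2 - d = m + 2 := by omega
    rw [e1, e2, e3]
    match m with
    | 0 => rfl
    | 1 => rfl
    | (k+2) =>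
      show gq (k+5) = 2^(k+2) + GF (k+4)
      simp only [gq, GF]
      rw [if_neg (by omega), if_neg (by omega), if_neg (by omega), if_neg (by omega)]
      have e5 : k+5-1 = k+4 := by omega
      have e6 : k+5-4 = k+1 := by omega
      have e3' : k+4-2 = k+2 := by omega
      have e4 : k+4-3 = k+1 := by omega
      rw [e5, e6, e3', e4]
      rw [pow_succ]
      ring
  · rw [if_neg h]
    have h1 : n+3-d ≤ 2 := by omega
    have h2 : n+2-d ≤ 2 := by omega
    simp only [gq, GF]
    rw [if_pos h1, if_pos h2]

lemma AR3 (n : ℕ) : zF (n+1) = zF n + GF (n+1) := by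
  match n with
  | 0 => rfl
  | 1 => rfl
  | 2 => rfl
  | (m+3) =>
    show zF (m+4) = zF (m+3) + GF (m+4)
    simp only [zF, GF]
    rw [if_neg (by omega), if_neg (by omega), if_neg (by omega), if_neg (by omega)]
    have e1 : m+4-3 = m+1 := by omega
    have e2 : m+4-2 = m+2 := by omega
    have e3 : m+3-3 = m := by omega
    have e4 : m+3-2 = m+1 := by omega
    rw [e1, e2, e3, e4]
    rw [pow_succ]
    ring

lemma AR4 (n : ℕ) : 2^n + GF (n+1) + zF n = n * 2^(n-1) + 1 := by
  match n with
  | 0 => rfl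
  | 1 => rfl
  | 2 => rfl
  | (m+3) =>
    show 2^(m+3) + GF (m+4) + zF (m+3) = (m+3) * 2^(m+2) + 1
    simp only [zF, GF]
    rw [if_neg (by omega), if_neg (by omega), if_neg (by omega)]
    have e1 : m+4-2 = m+2 := by omega
    have e2 : m+4-3 = m+1 := by omega
    have e3 : m+3-3 = m := by omega
    have e4 : m+3-2 = m+1 := by omega
    rw [e1, e2, e3, e4]
    rw [pow_succ, pow_succ]
    ring

lemma S_wAany_eq (n : ℕ) : S n wAany = 2^n := by
  induction n with
  | zero => rfl
  | succ n ih => rw [S_wAany_succ, ih, pow_succ]; ring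

lemma S_wAge_eq : ∀ n d, 1 ≤ d → S n (wAge d) = if d ≤ n then 2^(n-d) else 0 := by
  intro n
  induction n with
  | zero =>
    intro d hd
    rw [S_zero]
    show (if d ≤ 0 - 0 then 1 else 0) = _
    rw [if_neg (by omega), if_neg (by omega)]
  | succ n ih =>
    intro d hd
    match d, hd with
    | 1, _ =>
      rw [S_wAge_one_succ, S_wAany_eq, if_pos (by omega)]
      norm_num
    | (d'+2), _ =>
      rw [S_wAge_succ_succ, ih (d'+1) (by omega)]
      by_cases h : d'+1 ≤ n
      · rw [if_pos h, if_pos (by omega)]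
        congr 1
        omega
      · rw [if_neg h, if_neg (by omega)]

lemma S_wD_eq : ∀ n d, 1 ≤ d → S n (wD d) = gq (n+2-d) := by
  intro n
  induction n with
  | zero =>
    intro d hd
    rw [S_zero]
    show (0:ℕ) = gq (2-d)
    simp only [gq]
    rw [if_pos (by omega)]
  | succ n ih =>
    intro d hd
    rw [S_wD_succ n d hd, S_add, S_wAge_eq n d hd, S_wDge_eq]
    have h1 : (∑ d' ∈ Finset.Icc d n, S n (wD d')) = ∑ d' ∈ Finset.Icc d n, gq (n+2-d') := by
      apply Finset.sum_congr rfl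
      intro d' hd'
      exact ih d' (le_trans hd (Finset.mem_Icc.mp hd').1)
    rw [h1, AR1, ← AR2 n d hd]

lemma S_wDge_closed (n e : ℕ) (he : 1 ≤ e) : S n (wDge e) = GF (n+2-e) := by
  rw [S_wDge_eq]
  rw [Finset.sum_congr rfl (fun d hd => S_wD_eq n d (le_trans he (Finset.mem_Icc.mp hd).1))]
  exact AR1 n e

lemma S_wZ_eq (n : ℕ) : S n wZ = zF n := by
  induction n with
  | zero => rfl
  | succ n ih =>
    rw [S_wZ_succ, S_add, ih, S_wDge_closed n 1 (le_refl 1), AR3]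
    norm_num

lemma card_G (n : ℕ) : (G n).card = n * 2^(n-1) + 1 := by
  have h1 : (G n).card = S n (fun _ => 1) := by
    unfold S
    rw [Finset.card_eq_sum_ones]
  rw [h1]
  have h2 : S n (fun _ => 1) = S n (fun s => wAany s + (wDge 1 s + wZ s)) := by
    apply S_eq
    intro s hOK
    cases s with
    | A m c => simp [wAany, wDge, wZ]
    | D m c v0 =>
      obtain ⟨hcv, -, -⟩ := hOK
      simp only [wAany, wDge, wZ]
      rw [if_pos (by omega)]
    | Z => simp [wAany, wDge, wZ]
  rw [h2, S_add, S_add, S_wAany_eq, S_wDge_closed n 1 (le_refl 1), S_wZ_eq]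
  have e : n + 2 - 1 = n + 1 := by omega
  rw [e]
  rw [← AR4]
  ring

theorem stmt_2 (n : ℕ) (hn : 1 ≤ n) :
    Nat.card {x : List ℕ // x.length = n ∧ IsAscSeq x ∧ Avoids [0, 1, 0, 1] x ∧ Avoids [0, 1, 1, 2] x} = (n - 1) * 2 ^ (n - 2) + 1 := by
  obtain ⟨k, rfl⟩ : ∃ k, n = k + 1 := ⟨n - 1, by omega⟩
  have key : ∀ x : List ℕ,
      (x.length = k + 1 ∧ IsAscSeq x ∧ Avoids [0,1,0,1] x ∧ Avoids [0,1,1,2] x) ↔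
        x ∈ (G k).image Prod.fst := by
    intro x
    constructor
    · rintro ⟨hlen, h1, h2, h3⟩
      obtain ⟨s, hs⟩ := complete k x ⟨h1, h2, h3⟩ hlen
      exact Finset.mem_image.mpr ⟨(x, s), hs, rfl⟩
    · intro hx
      obtain ⟨p, hp, rfl⟩ := Finset.mem_image.mp hx
      obtain ⟨hval, -, hlen⟩ := inv_of_mem k p hp
      exact ⟨hlen, hval.1, hval.2.1, hval.2.2⟩
  have equiv : {x : List ℕ // x.length = k + 1 ∧ IsAscSeq x ∧ Avoids [0,1,0,1] x ∧ Avoids [0,1,1,2] x}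
      ≃ {x : List ℕ // x ∈ (G k).image Prod.fst} := Equiv.subtypeEquivRight key
  rw [Nat.card_congr equiv, Nat.card_eq_fintype_card, Fintype.card_coe]
  have himg : ((G k).image Prod.fst).card = (G k).card := by
    apply Finset.card_image_of_injOn
    intro p hp q hq h
    exact fst_injOn k p (Finset.mem_coe.mp hp) q (Finset.mem_coe.mp hq) h
  rw [himg, card_G]
  have e1 : k + 1 - 1 = k := by omega
  have e2 : k + 1 - 2 = k - 1 := by omega
  rw [e1, e2]
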